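/- arXiv:1407.2869 — 7 statements merged into one kernel-verified Lean document; each statement's English description precedes it below -/
import Mathlib

section
/- Let n ≥ 2 and let A ∈ ℂ^{n×n}. For any invertible block-diagonal matrix G = [g] ⊕ Γ with g ∈ ℂ* and Γ ∈ GL_{n-1}(ℂ), and for each j with 2 ≤ j ≤ n, the sum of determinants of j×j principal submatrices of G⁻¹AG whose index sets contain 1 equals the corresponding sum for A; equivalently, the map π_n defined by π_n(A) = (a_{1,1}, Σ_{I∈𝓘²: i₁=1} det(A_I), …, Σ_{I∈𝓘ⁿ: i₁=1} det(A_I); Σ_{I∈𝓘¹: i₁≥2} det(A_I), …, Σ_{I∈𝓘^{n−1}: i₁≥2} det(A_I)) is constant on the conjugacy orbit {G⁻¹AG : G ∈ ℂ* ⊕ GL_{n−1}(ℂ)}. -/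
open Matrix BigOperators

/-- Determinant of the principal submatrix of `A` indexed by `s`. -/
noncomputable def subDet {m : ℕ} (A : Matrix (Fin m) (Fin m) ℂ) (s : Finset (Fin m)) : ℂ :=
  Matrix.det (A.submatrix (fun i : {a : Fin m // a ∈ s} => (i : Fin m))
    (fun i : {a : Fin m // a ∈ s} => (i : Fin m)))

/-- `piX A j` = sum of determinants of `j × j` principal submatrices of `A` whose
index set contains the first index. (For `j = 1` this is the `(1,1)` entry.) -/
noncomputable def piX {m : ℕ} [NeZero m] (A : Matrix (Fin m) (Fin m) ℂ) (j : ℕ) : ℂ :=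
  ∑ s ∈ Finset.univ.filter (fun s : Finset (Fin m) => s.card = j ∧ (0 : Fin m) ∈ s),
    subDet A s

/-- `piY A j` = sum of determinants of `j × j` principal submatrices of `A` whose
index set does not contain the first index. -/
noncomputable def piY {m : ℕ} [NeZero m] (A : Matrix (Fin m) (Fin m) ℂ) (j : ℕ) : ℂ :=
  ∑ s ∈ Finset.univ.filter (fun s : Finset (Fin m) => s.card = j ∧ (0 : Fin m) ∉ s),
    subDet A s

open Polynomial

section Aux

/-- Determinant of a matrix whose rows in `s` come from `M` and whose rows off `s` are
scaled standard basis vectors. -/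
lemma det_piecewise {R : Type*} [CommRing R] {m : ℕ} (d : Fin m → R)
    (M : Matrix (Fin m) (Fin m) R) (s : Finset (Fin m)) :
    Matrix.det (Matrix.of (s.piecewise (fun i => M i) (fun i => Pi.single i (d i)))) =
      (∏ i ∈ sᶜ, d i) *
        Matrix.det (M.submatrix (fun i : {a : Fin m // a ∈ s} => (i : Fin m))
          (fun i : {a : Fin m // a ∈ s} => (i : Fin m))) := by
  classical
  set N : Matrix (Fin m) (Fin m) R :=
    Matrix.of (s.piecewise (fun i => M i) (fun i => Pi.single i (d i))) with hN
  let e : {a : Fin m // a ∈ s} ⊕ {a : Fin m // ¬ a ∈ s} ≃ Fin m :=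
    Equiv.sumCompl (fun a => a ∈ s)
  rw [← Matrix.det_submatrix_equiv_self e N]
  have hsub : N.submatrix e e =
      Matrix.fromBlocks
        (M.submatrix (fun i : {a : Fin m // a ∈ s} => (i : Fin m))
          (fun i : {a : Fin m // a ∈ s} => (i : Fin m)))
        (M.submatrix (fun i : {a : Fin m // a ∈ s} => (i : Fin m))
          (fun i : {a : Fin m // ¬ a ∈ s} => (i : Fin m)))
        0 (Matrix.diagonal (fun i : {a : Fin m // ¬ a ∈ s} => d i)) := by
    ext i j
    cases i with
    | inl i =>
      cases j with
      | inl j => simp [N, e, Finset.piecewise, i.2]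
      | inr j => simp [N, e, Finset.piecewise, i.2]
    | inr i =>
      cases j with
      | inl j =>
        have hij : (j : Fin m) ≠ (i : Fin m) := by
          intro h
          exact i.2 (h ▸ j.2)
        simp [N, e, Finset.piecewise, i.2, Pi.single_apply, hij]
      | inr j =>
        by_cases h : i = j
        · subst h
          simp [N, e, Finset.piecewise, i.2, Pi.single_apply]
        · have hij : (j : Fin m) ≠ (i : Fin m) := fun hh => h (Subtype.ext hh.symm)
          simp [N, e, Finset.piecewise, i.2, Pi.single_apply, hij,
            Matrix.diagonal_apply_ne _ h]
  rw [hsub, Matrix.det_fromBlocks_zero₂₁, Matrix.det_diagonal, mul_comm]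
  congr 1
  rw [← Finset.prod_subtype sᶜ (fun x => Finset.mem_compl) d]

/-- Expansion of `det (diagonal d + M)` as a sum over principal minors. -/
lemma det_diagonal_add {R : Type*} [CommRing R] {m : ℕ} (d : Fin m → R)
    (M : Matrix (Fin m) (Fin m) R) :
    Matrix.det (Matrix.diagonal d + M) =
      ∑ s : Finset (Fin m), (∏ i ∈ sᶜ, d i) *
        Matrix.det (M.submatrix (fun i : {a : Fin m // a ∈ s} => (i : Fin m))
          (fun i : {a : Fin m // a ∈ s} => (i : Fin m))) := by
  classical
  have hrow : (Matrix.diagonal d + M : Matrix (Fin m) (Fin m) R) =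
      Matrix.of ((fun i => M i) + fun i => Pi.single i (d i)) := by
    ext i j
    by_cases h : i = j <;>
      simp [Matrix.diagonal_apply, Pi.single_apply, h, eq_comm, add_comm]
  rw [hrow]
  have := (Matrix.detRowAlternating (R := R) (n := Fin m)).toMultilinearMap.map_add_univ
    (fun i => M i) (fun i => Pi.single i (d i))
  calc Matrix.det (Matrix.of ((fun i => M i) + fun i => Pi.single i (d i)))
      = ∑ s : Finset (Fin m),
          Matrix.det (Matrix.of (s.piecewise (fun i => M i) (fun i => Pi.single i (d i)))) := by exact this
    _ = _ := by
        refine Finset.sum_congr rfl fun s _ => det_piecewise d M s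

noncomputable def ccX : ℂ →+* Polynomial (Polynomial ℂ) :=
  (Polynomial.C).comp Polynomial.C

noncomputable def ddX (m : ℕ) [NeZero m] : Fin m → Polynomial (Polynomial ℂ) :=
  fun i => if i = 0 then Polynomial.X else Polynomial.C Polynomial.X

lemma prod_ddX {m : ℕ} [NeZero m] (s : Finset (Fin m)) :
    (∏ i ∈ sᶜ, ddX m i) =
      Polynomial.X ^ (if (0 : Fin m) ∈ s then 0 else 1) *
        Polynomial.C (Polynomial.X ^ ((sᶜ.erase 0).card)) := by
  classical
  by_cases h : (0 : Fin m) ∈ s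
  · have h0 : (0 : Fin m) ∉ sᶜ := by simpa using h
    have herase : sᶜ.erase 0 = sᶜ := Finset.erase_eq_of_notMem h0
    have : ∏ i ∈ sᶜ, ddX m i = ∏ _i ∈ sᶜ, Polynomial.C (Polynomial.X : Polynomial ℂ) := by
      refine Finset.prod_congr rfl fun i hi => ?_
      have : i ≠ 0 := fun hh => h0 (hh ▸ hi)
      simp [ddX, this]
    rw [this, Finset.prod_const, herase, if_pos h, pow_zero, one_mul, ← Polynomial.C_pow]
  · have h0 : (0 : Fin m) ∈ sᶜ := by simpa using h
    rw [← Finset.mul_prod_erase sᶜ _ h0]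
    have : ∏ i ∈ sᶜ.erase 0, ddX m i
        = ∏ _i ∈ sᶜ.erase 0, Polynomial.C (Polynomial.X : Polynomial ℂ) := by
      refine Finset.prod_congr rfl fun i hi => ?_
      have : i ≠ 0 := Finset.ne_of_mem_erase hi
      simp [ddX, this]
    rw [this, Finset.prod_const, if_neg h, pow_one, ← Polynomial.C_pow]
    simp [ddX]

lemma coeff_term {m : ℕ} [NeZero m] (s : Finset (Fin m)) (c : ℂ) (a b : ℕ) :
    ((((∏ i ∈ sᶜ, ddX m i) * ccX c).coeff a).coeff b) =
      if ((if (0 : Fin m) ∈ s then 0 else 1) = a ∧ (sᶜ.erase 0).card = b) then c else 0 := by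
  rw [prod_ddX]
  set e : ℕ := if (0 : Fin m) ∈ s then 0 else 1
  set f : ℕ := (sᶜ.erase 0).card
  have : Polynomial.X ^ e * Polynomial.C (Polynomial.X ^ f) * ccX c =
      Polynomial.monomial e (Polynomial.monomial f c) := by
    rw [← Polynomial.C_mul_X_pow_eq_monomial (n := f), ← Polynomial.C_mul_X_pow_eq_monomial,
      Polynomial.C_mul, ccX]
    simp only [RingHom.comp_apply]
    ring
  rw [this, Polynomial.coeff_monomial]
  by_cases he : e = a
  · rw [if_pos he, Polynomial.coeff_monomial]
    by_cases hf : f = b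
    · simp [he, hf]
    · simp [he, hf]
  · rw [if_neg he]
    simp [he]

lemma gen_expand {m : ℕ} [NeZero m] (B : Matrix (Fin m) (Fin m) ℂ) :
    Matrix.det (Matrix.diagonal (ddX m) + B.map ccX) =
      ∑ s : Finset (Fin m), (∏ i ∈ sᶜ, ddX m i) * ccX (subDet B s) := by
  rw [det_diagonal_add]
  refine Finset.sum_congr rfl fun s _ => ?_
  congr 1
  rw [Matrix.submatrix_map, subDet, RingHom.map_det, RingHom.mapMatrix_apply]

lemma coeff_gen {m : ℕ} [NeZero m] (B : Matrix (Fin m) (Fin m) ℂ) (a b : ℕ) :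
    (((Matrix.det (Matrix.diagonal (ddX m) + B.map ccX)).coeff a).coeff b) =
      ∑ s ∈ Finset.univ.filter
          (fun s : Finset (Fin m) =>
            (if (0 : Fin m) ∈ s then 0 else 1) = a ∧ (sᶜ.erase 0).card = b),
        subDet B s := by
  rw [gen_expand, Polynomial.finset_sum_coeff, Polynomial.finset_sum_coeff,
    Finset.sum_filter]
  exact Finset.sum_congr rfl fun s _ => coeff_term s (subDet B s) a b

lemma piXY_of_gen {m : ℕ} [NeZero m] (B B' : Matrix (Fin m) (Fin m) ℂ)
    (hgen : Matrix.det (Matrix.diagonal (ddX m) + B.map ccX) =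
      Matrix.det (Matrix.diagonal (ddX m) + B'.map ccX)) :
    (∀ j : ℕ, piX B j = piX B' j) ∧ (∀ j : ℕ, piY B j = piY B' j) := by
  classical
  have key : ∀ a b : ℕ,
      (∑ s ∈ Finset.univ.filter
          (fun s : Finset (Fin m) =>
            (if (0 : Fin m) ∈ s then 0 else 1) = a ∧ (sᶜ.erase 0).card = b),
        subDet B s) =
      (∑ s ∈ Finset.univ.filter
          (fun s : Finset (Fin m) =>
            (if (0 : Fin m) ∈ s then 0 else 1) = a ∧ (sᶜ.erase 0).card = b),
        subDet B' s) := by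
    intro a b
    rw [← coeff_gen, ← coeff_gen, hgen]
  have hcard : ∀ s : Finset (Fin m), s.card ≤ m := by
    intro s
    simpa using Finset.card_le_univ s
  have hcompl : ∀ s : Finset (Fin m), sᶜ.card = m - s.card := by
    intro s
    simp [Finset.card_compl]
  constructor
  · intro j
    by_cases hj : j ≤ m
    · have hfil : (Finset.univ.filter
          (fun s : Finset (Fin m) => s.card = j ∧ (0 : Fin m) ∈ s)) =
          (Finset.univ.filter
          (fun s : Finset (Fin m) =>
            (if (0 : Fin m) ∈ s then 0 else 1) = 0 ∧ (sᶜ.erase 0).card = m - j)) := by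
        ext s
        simp only [Finset.mem_filter, Finset.mem_univ, true_and]
        constructor
        · rintro ⟨hc, h0⟩
          have h0' : (0 : Fin m) ∉ sᶜ := by simpa using h0
          rw [Finset.erase_eq_of_notMem h0', hcompl s, if_pos h0, hc]
          exact ⟨rfl, rfl⟩
        · rintro ⟨he, hf⟩
          have h0 : (0 : Fin m) ∈ s := by
            by_contra h0
            rw [if_neg h0] at he
            exact one_ne_zero he
          have h0' : (0 : Fin m) ∉ sᶜ := by simpa using h0
          rw [Finset.erase_eq_of_notMem h0', hcompl s] at hf
          have := hcard s
          exact ⟨by omega, h0⟩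
      rw [piX, piX, hfil, key 0 (m - j)]
    · rw [piX, piX, Finset.sum_eq_zero, Finset.sum_eq_zero] <;>
      · intro s hs
        rw [Finset.mem_filter] at hs
        exact absurd (hs.2.1 ▸ hcard s) (by omega)
  · intro j
    by_cases hj : j < m
    · have hfil : (Finset.univ.filter
          (fun s : Finset (Fin m) => s.card = j ∧ (0 : Fin m) ∉ s)) =
          (Finset.univ.filter
          (fun s : Finset (Fin m) =>
            (if (0 : Fin m) ∈ s then 0 else 1) = 1 ∧ (sᶜ.erase 0).card = m - 1 - j)) := by
        ext s
        simp only [Finset.mem_filter, Finset.mem_univ, true_and]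
        constructor
        · rintro ⟨hc, h0⟩
          have h0' : (0 : Fin m) ∈ sᶜ := by simpa using h0
          have h1 : 1 ≤ sᶜ.card := Finset.card_pos.mpr ⟨0, h0'⟩
          rw [Finset.card_erase_of_mem h0', hcompl s, if_neg h0, hc]
          rw [hcompl s] at h1
          have := hcard s
          exact ⟨rfl, by omega⟩
        · rintro ⟨he, hf⟩
          have h0 : (0 : Fin m) ∉ s := by
            by_contra h0
            rw [if_pos h0] at he
            exact one_ne_zero he.symm
          have h0' : (0 : Fin m) ∈ sᶜ := by simpa using h0
          have h1 : 1 ≤ sᶜ.card := Finset.card_pos.mpr ⟨0, h0'⟩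
          rw [Finset.card_erase_of_mem h0', hcompl s] at hf
          rw [hcompl s] at h1
          have := hcard s
          exact ⟨by omega, h0⟩
      rw [piY, piY, hfil, key 1 (m - 1 - j)]
    · rw [piY, piY, Finset.sum_eq_zero, Finset.sum_eq_zero] <;>
      · intro s hs
        rw [Finset.mem_filter] at hs
        have h0' : (0 : Fin m) ∈ sᶜ := by simpa using hs.2.2
        have h1 : 1 ≤ sᶜ.card := Finset.card_pos.mpr ⟨0, h0'⟩
        rw [hcompl s] at h1
        have := hcard s
        have := hs.2.1
        omega

lemma gen_conj (n : ℕ) (A G : Matrix (Fin (n+2)) (Fin (n+2)) ℂ)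
    (hG : IsUnit G)
    (hblock : ∀ j : Fin (n+2), j ≠ 0 → G 0 j = 0 ∧ G j 0 = 0) :
    Matrix.det (Matrix.diagonal (ddX (n+2)) + (G⁻¹ * A * G).map ccX) =
      Matrix.det (Matrix.diagonal (ddX (n+2)) + A.map ccX) := by
  have hdet : IsUnit G.det := (Matrix.isUnit_iff_isUnit_det G).mp hG
  set Gm := ccX.mapMatrix G with hGm
  set Hm := ccX.mapMatrix G⁻¹ with hHm
  set Am := ccX.mapMatrix A with hAm
  set D := Matrix.diagonal (ddX (n+2)) with hD
  have hmapA : A.map ccX = Am := (RingHom.mapMatrix_apply ccX A).symm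
  have hmap : (G⁻¹ * A * G).map ccX = Hm * Am * Gm := by
    rw [← RingHom.mapMatrix_apply, _root_.map_mul, _root_.map_mul]
  have hHG : Hm * Gm = 1 := by
    rw [hHm, hGm, ← _root_.map_mul, Matrix.nonsing_inv_mul G hdet, _root_.map_one]
  have hGH : Gm * Hm = 1 := by
    rw [hHm, hGm, ← _root_.map_mul, Matrix.mul_nonsing_inv G hdet, _root_.map_one]
  have hcomm : D * Gm = Gm * D := by
    refine Matrix.ext fun i j => ?_
    rw [hD, Matrix.diagonal_mul, Matrix.mul_diagonal]
    by_cases hi : i = 0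
    · by_cases hj : j = 0
      · rw [hi, hj, mul_comm]
      · have hz : G 0 j = 0 := (hblock j hj).1
        rw [hi]
        simp [hGm, hz]
    · by_cases hj : j = 0
      · have hz : G i 0 = 0 := (hblock i hi).2
        rw [hj]
        simp [hGm, hz]
      · simp only [ddX, if_neg hi, if_neg hj]
        exact mul_comm _ _
  have hcommH : Hm * D = D * Hm := by
    calc Hm * D = Hm * D * (Gm * Hm) := by rw [hGH, mul_one]
      _ = Hm * (D * Gm) * Hm := by rw [← mul_assoc, mul_assoc Hm D Gm]
      _ = Hm * (Gm * D) * Hm := by rw [hcomm]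
      _ = Hm * Gm * (D * Hm) := by rw [← mul_assoc Hm Gm D, mul_assoc]
      _ = D * Hm := by rw [hHG, one_mul]
  have hfactor : D + Hm * Am * Gm = Hm * (D + Am) * Gm := by
    have h1 : Hm * D * Gm = D := by rw [hcommH, mul_assoc, hHG, mul_one]
    rw [Matrix.mul_add, Matrix.add_mul, h1]
  rw [hmap, hmapA, hfactor, Matrix.det_mul, Matrix.det_mul]
  have : Hm.det * Gm.det = 1 := by rw [← Matrix.det_mul, hHG, Matrix.det_one]
  calc Hm.det * (D + Am).det * Gm.det = (D + Am).det * (Hm.det * Gm.det) := by ring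
    _ = (D + Am).det := by rw [this, mul_one]

end Aux

/-- The map `π_n` is constant on conjugacy orbits under `ℂ* ⊕ GL_{n−1}(ℂ)`:
for any invertible block-diagonal `G` (nonzero scalar top-left entry, invertible
lower-right block), all the components of `π_n` agree on `G⁻¹AG` and `A`. -/
theorem stmt1 (n : ℕ) (A G : Matrix (Fin (n+2)) (Fin (n+2)) ℂ)
    (hG : IsUnit G)
    (hblock : ∀ j : Fin (n+2), j ≠ 0 → G 0 j = 0 ∧ G j 0 = 0) :
    (∀ j : ℕ, piX (G⁻¹ * A * G) j = piX A j) ∧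
    (∀ j : ℕ, piY (G⁻¹ * A * G) j = piY A j) := by
  exact piXY_of_gen (G⁻¹ * A * G) A (gen_conj n A G hG hblock)
end

section
/- Let n ≥ 2. The set of matrices A ∈ ℂ^{n×n} such that either the submatrix A₁ (deleting the first row and column) is derogatory, or the vector (a_{2,1},…,a_{n,1}) is not a cyclic vector of A₁, has Lebesgue measure zero in ℂ^{n×n} ≅ ℝ^{2n²}. -/
open Matrix MeasureTheory

/-- `v` is a cyclic vector of `X`: the iterates `v, Xv, X²v, …` span the whole space. -/
def IsCyclicVec {m : ℕ} (X : Matrix (Fin m) (Fin m) ℂ) (v : Fin m → ℂ) : Prop :=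
  Submodule.span ℂ (Set.range fun k : ℕ => (X ^ k) *ᵥ v) = ⊤

/-!
Both conditions fail as soon as the square Krylov matrix `[v, A₁v, A₁²v, …]` of the
first-column vector `v` is invertible. Its determinant is a polynomial in the entries of `A`,
and it is not the zero polynomial: for `A₁` diagonal with distinct entries and `v = (1, …, 1)`
the Krylov matrix is a Vandermonde matrix. The zero locus of a nonzero polynomial is
Lebesgue-null, by induction on the number of variables and Fubini: all but finitely many
slices are zero loci of nonzero polynomials in one variable fewer.
-/

lemma MeasureTheory.volume_measurePreserving_uncurry (ι κ α : Type*)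
    [Fintype ι] [Fintype κ] [MeasureSpace α] [SigmaFinite (volume : Measure α)] :
    MeasurePreserving (Function.uncurry : (ι → κ → α) → ι × κ → α) volume volume := by
  have hmeas : Measurable (Function.uncurry : (ι → κ → α) → ι × κ → α) :=
    (MeasurableEquiv.curry ι κ α).symm.measurable
  refine ⟨hmeas, (Measure.pi_eq fun s hs => ?_).symm⟩
  rw [Measure.map_apply hmeas (MeasurableSet.univ_pi hs)]
  have : Function.uncurry ⁻¹' Set.univ.pi s =
      Set.univ.pi fun i => Set.univ.pi fun j => s (i, j) := by
    ext A; simp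
  rw [this, volume_pi_pi]
  simp_rw [volume_pi_pi, Fintype.prod_prod_type]

namespace MvPolynomial

lemma eval_cons_eq_eval_eval_finSuccEquiv {R : Type*} [CommSemiring R] {m : ℕ}
    (f : MvPolynomial (Fin (m + 1)) R) (y : R) (s : Fin m → R) :
    eval (Fin.cons y s : Fin (m + 1) → R) f =
      eval s (Polynomial.eval (C y) (finSuccEquiv R m f)) := by
  rw [eval_eq_eval_mv_eval', Polynomial.eval_map, ← Polynomial.eval₂_at_apply, eval_C]

lemma measurable_eval {R σ : Type*} [CommSemiring R] [MeasurableSpace R]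
    [MeasurableAdd₂ R] [MeasurableMul₂ R] (f : MvPolynomial σ R) :
    Measurable fun x : σ → R => eval x f := by
  induction f using induction_on with
  | C a => simp only [eval_C]; exact measurable_const
  | add p q hp hq => simp only [map_add]; exact hp.add hq
  | mul_X p i hp => simp only [map_mul, eval_X]; exact hp.mul (measurable_pi_apply i)

lemma measurableSet_zeroLocus {R σ : Type*} [CommSemiring R] [MeasurableSpace R]
    [MeasurableSingletonClass R] [MeasurableAdd₂ R] [MeasurableMul₂ R] (f : MvPolynomial σ R) :
    MeasurableSet {x : σ → R | eval x f = 0} :=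
  measurable_eval f (measurableSet_singleton 0)

section ZeroLocus

variable {K : Type*} [CommRing K] [IsDomain K] [MeasureSpace K] [MeasurableSingletonClass K]
  [MeasurableAdd₂ K] [MeasurableMul₂ K]
  [NullSingletonClass (volume : Measure K)] [SigmaFinite (volume : Measure K)]

lemma volume_zeroLocus_fin (m : ℕ) (f : MvPolynomial (Fin m) K) (hf : f ≠ 0) :
    volume {x : Fin m → K | eval x f = 0} = 0 := by
  induction m with
  | zero =>
    rw [eq_C_of_isEmpty f] at hf ⊢
    simp_all
  | succ m ih =>
    set q := finSuccEquiv K m f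
    have hq : q ≠ 0 := by simpa [q] using hf
    let e := MeasurableEquiv.piFinSuccAbove (fun _ : Fin (m + 1) => K) 0
    let T := e.symm ⁻¹' {x | eval x f = 0}
    have hT : MeasurableSet T := e.symm.measurable (measurableSet_zeroLocus f)
    have hfin : {y : K | Polynomial.eval (C y) q = 0}.Finite :=
      (Polynomial.finite_setOfPred_isRoot hq).preimage (C_injective _ _).injOn
    rw [show {x | eval x f = 0} = e ⁻¹' T by ext; simp [T],
      (volume_preserving_piFinSuccAbove _ 0).measure_preimage hT.nullMeasurableSet]
    refine (Measure.measure_prod_null hT).2 ?_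
    filter_upwards [compl_mem_ae_iff.2 (hfin.measure_zero volume)] with y hy
    have hslice : Prod.mk y ⁻¹' T = {s : Fin m → K | eval s (Polynomial.eval (C y) q) = 0} := by
      ext s
      simp only [T, e, Set.mem_preimage, MeasurableEquiv.piFinSuccAbove_symm_apply,
        Fin.insertNthEquiv, Equiv.coe_fn_mk, Fin.insertNth_zero', Set.mem_ofPred_eq,
        eval_cons_eq_eval_eval_finSuccEquiv, q]
    rw [hslice]
    exact ih _ hy

lemma volume_zeroLocus {σ : Type*} [Fintype σ] (f : MvPolynomial σ K) (hf : f ≠ 0) :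
    volume {x : σ → K | eval x f = 0} = 0 := by
  let e := (Fintype.equivFin σ).symm
  have hmp := volume_measurePreserving_piCongrLeft (fun _ : σ => K) e
  have hpre : MeasurableEquiv.piCongrLeft (fun _ : σ => K) e ⁻¹' {x | eval x f = 0} =
      {y | eval y (rename e.symm f) = 0} := by
    ext y
    have hy : MeasurableEquiv.piCongrLeft (fun _ : σ => K) e y = y ∘ e.symm := by
      funext i
      rw [← e.apply_symm_apply i, MeasurableEquiv.piCongrLeft_apply_apply]
      simp
    simp only [Set.mem_preimage, Set.mem_ofPred_eq, eval_rename, hy]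
  rw [← hmp.measure_preimage (measurableSet_zeroLocus f).nullMeasurableSet, hpre]
  exact volume_zeroLocus_fin _ _ ((map_ne_zero_iff _ (rename_injective _ e.symm.injective)).2 hf)

lemma volume_zeroLocus_uncurry {ι κ : Type*} [Fintype ι] [Fintype κ]
    (f : MvPolynomial (ι × κ) K) (hf : f ≠ 0) :
    volume {A : ι → κ → K | eval (Function.uncurry A) f = 0} = 0 := by
  rw [← volume_zeroLocus f hf]
  exact (volume_measurePreserving_uncurry ι κ K).measure_preimage
    (measurableSet_zeroLocus f).nullMeasurableSet

end ZeroLocus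

end MvPolynomial

namespace Matrix

variable {R : Type*} {m : ℕ}

def krylov [CommSemiring R] (X : Matrix (Fin m) (Fin m) R) (v : Fin m → R) :
    Matrix (Fin m) (Fin m) R :=
  of fun i k => (X ^ (k : ℕ) *ᵥ v) i

lemma krylov_map [CommSemiring R] {S : Type*} [CommSemiring S] (f : R →+* S)
    (X : Matrix (Fin m) (Fin m) R) (v : Fin m → R) :
    (krylov X v).map f = krylov (X.map f) (f ∘ v) := by
  ext i k
  simp only [krylov, map_apply, of_apply, ← RingHom.mapMatrix_apply, ← map_pow]
  rw [RingHom.mapMatrix_apply, RingHom.map_mulVec]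

lemma krylov_diagonal_one [CommRing R] (d : Fin m → R) :
    krylov (diagonal d) 1 = vandermonde d := by
  ext i k
  simp [krylov, diagonal_pow, mulVec_diagonal, vandermonde_apply]

end Matrix

lemma IsCyclicVec.of_det_krylov_ne_zero {m : ℕ} {X : Matrix (Fin m) (Fin m) ℂ} {v : Fin m → ℂ}
    (h : (krylov X v).det ≠ 0) : IsCyclicVec X v := by
  have hsurj : Function.Surjective (krylov X v).mulVec :=
    mulVec_surjective_iff_isUnit.2 ((isUnit_iff_isUnit_det _).2 (isUnit_iff_ne_zero.2 h))
  rw [IsCyclicVec, eq_top_iff, ← (LinearMap.range_eq_top (f := (krylov X v).mulVecLin)).2 hsurj,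
    range_mulVecLin]
  exact Submodule.span_mono (Set.range_subset_iff.2 fun k => ⟨k, rfl⟩)

namespace MvPolynomial

variable (R : Type*) [CommRing R] (m : ℕ)

noncomputable def cornerKrylovDet : MvPolynomial (Fin (m + 1) × Fin (m + 1)) R :=
  (krylov (of fun i j : Fin m => X (i.succ, j.succ)) fun i => X (i.succ, 0)).det

variable {R m}

lemma eval_cornerKrylovDet (A : Fin (m + 1) → Fin (m + 1) → R) :
    eval (Function.uncurry A) (cornerKrylovDet R m) =
      (krylov (of fun i j : Fin m => A i.succ j.succ) fun i => A i.succ 0).det := by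
  rw [cornerKrylovDet, RingHom.map_det, RingHom.mapMatrix_apply, krylov_map]
  congr 2
  · ext i j; simp
  · ext i; simp

lemma cornerKrylovDet_ne_zero [IsDomain R] [CharZero R] : cornerKrylovDet R m ≠ 0 := by
  let d : Fin m → R := fun j => (j : ℕ)
  have hd : Function.Injective d := Nat.cast_injective.comp Fin.val_injective
  intro h
  have := eval_cornerKrylovDet (Fin.cons 0 fun i => Fin.cons 1 (diagonal d i))
  simp only [h, map_zero, Fin.cons_succ, Fin.cons_zero] at this
  apply det_vandermonde_ne_zero_iff.2 hd
  rw [← krylov_diagonal_one]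
  exact this.symm

end MvPolynomial

/-- The set of `n × n` complex matrices `A` such that the lower-right submatrix `A₁`
(obtained by deleting the first row and column) is derogatory, or the first-column
vector `(a_{2,1},…,a_{n,1})` is not a cyclic vector of `A₁`, has Lebesgue measure zero. -/
theorem stmt3 (n : ℕ) :
    volume {A : Fin (n+2) → Fin (n+2) → ℂ |
      ¬ (∃ v : Fin (n+1) → ℂ,
          IsCyclicVec (Matrix.of fun i j : Fin (n+1) => A i.succ j.succ) v) ∨
      ¬ IsCyclicVec (Matrix.of fun i j : Fin (n+1) => A i.succ j.succ)
          (fun i => A i.succ 0)} = 0 := by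
  refine measure_mono_null (fun A hA => ?_)
    (MvPolynomial.volume_zeroLocus_uncurry _ MvPolynomial.cornerKrylovDet_ne_zero)
  by_contra hdet
  have hcyc := IsCyclicVec.of_det_krylov_ne_zero (by rwa [← MvPolynomial.eval_cornerKrylovDet])
  rcases hA with hnone | hcol
  · exact hnone ⟨_, hcyc⟩
  · exact hcol hcyc
end

section
/- Fix n ≥ 2, let E = {[w] ⊕ (z·I_{n−1}) : z, w ∈ ℂ} ⊂ ℂ^{n×n}, and let A ∈ ℂ^{n×n}. Writing π_n(A) = (X(A), Y(A)) with X(A) ∈ ℂⁿ given by X_{j+1}(A) = Σ_{I∈𝓘^{j+1}: i₁=1} det(A_I) (and X₁(A)=a_{1,1}) and Y(A) ∈ ℂ^{n−1} given by Y_j(A) = Σ_{I∈𝓘^j: i₁≥2} det(A_I), one has for every M = [w] ⊕ (z·I_{n−1}): det(I − AM) = (1 + Σ_{j=1}^{n−1} (−1)^j Y_j(A) z^j) − w·(Σ_{j=0}^{n−1} (−1)^j X_{j+1}(A) z^j). -/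
/-!
Expanding `det (1 + M * diagonal d)` multilinearly in the rows gives the sum over all index
sets `s` of `∏ i ∈ s, d i` times the principal minor of `M` on `s`. For `d = (a, b, …, b)`
this weight is `b ^ #s` or `a * b ^ (#s - 1)` according to whether `0 ∉ s` or `0 ∈ s`, so
grouping the minors by size and by whether they contain `0` produces exactly the sums `piY`
and `piX`; the formula is the case `a = -w`, `b = -z`.
-/
open Matrix BigOperators

/-- The block-diagonal matrix `[w] ⊕ (z·I_{n+1})`. -/
noncomputable def bdiag (n : ℕ) (w z : ℂ) : Matrix (Fin (n+2)) (Fin (n+2)) ℂ :=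
  Matrix.diagonal (fun i => if i = 0 then w else z)

open Finset

theorem Matrix.det_one_add_mul_diagonal {n R : Type*} [Fintype n] [DecidableEq n] [CommRing R]
    (M : Matrix n n R) (d : n → R) :
    det (1 + M * diagonal d) =
      ∑ s : Finset n, (∏ i ∈ s, d i) * (M.submatrix ((↑) : s → n) (↑)).det := by
  have hrows : 1 + diagonal d * M = of ((fun i => d i • M.row i) + (1 : Matrix n n R).row) := by
    ext i j
    simp [diagonal_mul, add_comm]
  rw [det_one_add_mul_comm, hrows]
  change detRowAlternating ((fun i => d i • M.row i) + (1 : Matrix n n R).row) = _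
  rw [AlternatingMap.map_add_univ]
  refine sum_congr rfl fun s _ => ?_
  have hpiece : s.piecewise (fun i => d i • M.row i) (1 : Matrix n n R).row =
      s.piecewise (fun i => d i • s.piecewise M.row (1 : Matrix n n R).row i)
        (s.piecewise M.row (1 : Matrix n n R).row) := by
    ext i : 1
    by_cases hi : i ∈ s <;> simp [hi]
  rw [hpiece]
  refine ((detRowAlternating (n := n) (R := R)).toMultilinearMap.map_piecewise_smul d _ s).trans ?_
  exact congrArg _ (det_piecewise_one_eq_submatrix_det M s)

theorem Finset.prod_ite_eq_mul_pow_of_mem {ι M : Type*} [DecidableEq ι] [CommMonoid M]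
    {s : Finset ι} {i₀ : ι} (h : i₀ ∈ s) (a b : M) :
    ∏ i ∈ s, (if i = i₀ then a else b) = a * b ^ (#s - 1) := by
  simp [prod_ite, filter_eq', filter_ne', h]

theorem Finset.prod_ite_eq_pow_of_notMem {ι M : Type*} [DecidableEq ι] [CommMonoid M]
    {s : Finset ι} {i₀ : ι} (h : i₀ ∉ s) (a b : M) :
    ∏ i ∈ s, (if i = i₀ then a else b) = b ^ #s := by
  simp [prod_ite, filter_eq', filter_ne', h]

theorem Finset.sum_sum_filter_card_eq_and {ι M : Type*} [Fintype ι] [AddCommMonoid M]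
    (p : Finset ι → Prop) [DecidablePred p] (f : Finset ι → M) {t : Finset ℕ}
    (ht : ∀ s, p s → #s ∈ t) :
    ∑ j ∈ t, ∑ s with #s = j ∧ p s, f s = ∑ s with p s, f s := by
  rw [← sum_fiberwise_of_maps_to (g := card) fun s hs => ht s (mem_filter.1 hs).2]
  simp only [filter_filter, and_comm]

section PrincipalMinors

variable {m : ℕ} [NeZero m] (A : Matrix (Fin m) (Fin m) ℂ) (b : ℂ)

theorem piY_zero : piY A 0 = 1 := by
  have h : (univ.filter fun s : Finset (Fin m) => #s = 0 ∧ (0 : Fin m) ∉ s) = {∅} := by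
    ext s
    simp +contextual [card_eq_zero]
  rw [piY, h, sum_singleton, subDet, det_isEmpty]

theorem sum_range_piY_mul_pow :
    ∑ j ∈ range m, piY A j * b ^ j = ∑ s with (0 : Fin m) ∉ s, b ^ #s * subDet A s := by
  have hcard : ∀ s : Finset (Fin m), (0 : Fin m) ∉ s → #s ∈ range m := fun s h => by
    have : s ≠ univ := fun hs => h (hs ▸ mem_univ _)
    simpa using card_lt_card (ssubset_univ_iff.2 this)
  rw [← sum_sum_filter_card_eq_and _ _ hcard]
  refine sum_congr rfl fun j _ => ?_
  rw [piY, sum_mul]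
  refine sum_congr rfl fun s hs => ?_
  rw [(mem_filter.1 hs).2.1, mul_comm]

theorem sum_range_piX_succ_mul_pow :
    ∑ j ∈ range m, piX A (j + 1) * b ^ j =
      ∑ s with (0 : Fin m) ∈ s, b ^ (#s - 1) * subDet A s := by
  have hcard : ∀ s : Finset (Fin m), (0 : Fin m) ∈ s →
      #s ∈ (range m).map (addRightEmbedding 1) := fun s h => by
    have hle : #s ≤ m := by simpa using card_le_univ s
    have hpos : 0 < #s := card_pos.2 ⟨0, h⟩
    exact mem_map.2 ⟨#s - 1, mem_range.2 (by omega), by rw [addRightEmbedding_apply]; omega⟩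
  rw [← sum_sum_filter_card_eq_and _ _ hcard, sum_map]
  refine sum_congr rfl fun j _ => ?_
  rw [piX, sum_mul]
  refine sum_congr rfl fun s hs => ?_
  rw [(mem_filter.1 hs).2.1, addRightEmbedding_apply, Nat.add_sub_cancel, mul_comm]

end PrincipalMinors

theorem det_one_add_mul_bdiag (n : ℕ) (A : Matrix (Fin (n+2)) (Fin (n+2)) ℂ) (a b : ℂ) :
    det (1 + A * bdiag n a b) =
      ∑ j ∈ range (n + 2), piY A j * b ^ j +
        a * ∑ j ∈ range (n + 2), piX A (j + 1) * b ^ j := by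
  rw [sum_range_piY_mul_pow, sum_range_piX_succ_mul_pow, mul_sum, bdiag,
    det_one_add_mul_diagonal, ← sum_filter_not_add_sum_filter _ fun s => (0 : Fin (n + 2)) ∈ s]
  congr 1
  · refine sum_congr rfl fun s hs => ?_
    rw [prod_ite_eq_pow_of_notMem (mem_filter.1 hs).2]
    rfl
  · refine sum_congr rfl fun s hs => ?_
    rw [prod_ite_eq_mul_pow_of_mem (mem_filter.1 hs).2, mul_assoc]
    rfl

/-- For `M = [w] ⊕ zI`:
`det(I − AM) = (1 + Σ_{j=1}^{n−1} (−1)^j Y_j(A) z^j) − w Σ_{j=0}^{n−1} (−1)^j X_{j+1}(A) z^j`. -/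
theorem stmt6 (n : ℕ) (A : Matrix (Fin (n+2)) (Fin (n+2)) ℂ) (w z : ℂ) :
    Matrix.det (1 - A * bdiag n w z) =
      (1 + ∑ j ∈ Finset.Icc 1 (n+1), (-1 : ℂ) ^ j * piY A j * z ^ j)
        - w * ∑ j ∈ Finset.range (n+2), (-1 : ℂ) ^ j * piX A (j+1) * z ^ j := by
  have hneg : 1 - A * bdiag n w z = 1 + A * bdiag n (-w) (-z) := by
    simp only [bdiag, sub_eq_add_neg, ← mul_neg, diagonal_neg, neg_ite]
  have hrange : range (n + 2) = insert 0 (Icc 1 (n + 1)) := by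
    ext j
    simp only [mem_range, mem_insert, mem_Icc]
    omega
  rw [hneg, det_one_add_mul_bdiag, hrange, sum_insert (by simp), piY_zero, ← hrange]
  have hcomm (c : ℂ) (j : ℕ) : c * (-z) ^ j = (-1) ^ j * c * z ^ j := by ring
  simp only [hcomm, pow_zero, mul_one]
  ring
end

section
/- Fix n ≥ 2 and (x, y) ∈ ℂⁿ × ℂ^{n−1}. Then (x, y) ∈ G_{1,n} if and only if for every w in the closed unit disc, the point ((y₁ − w·x₂)/(1 − w·x₁), …, (y_{n−1} − w·x_n)/(1 − w·x₁)) belongs to the symmetrized polydisc Γ_{n−1} (in particular 1 − w·x₁ ≠ 0 for all |w| ≤ 1). -/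
open BigOperators

/-- `P_n(z; x) = Σ_{j=0}^{n−1} (−1)^j x_{j+1} z^j`. -/
noncomputable def Pp {N : ℕ} (x : Fin N → ℂ) (z : ℂ) : ℂ :=
  ∑ j : Fin N, (-1 : ℂ) ^ (j : ℕ) * x j * z ^ (j : ℕ)

/-- `Q_n(z; y) = 1 + Σ_{j=1}^{n−1} (−1)^j y_j z^j`. -/
noncomputable def Qq {M : ℕ} (y : Fin M → ℂ) (z : ℂ) : ℂ :=
  1 + ∑ j : Fin M, (-1 : ℂ) ^ ((j : ℕ) + 1) * y j * z ^ ((j : ℕ) + 1)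

/-- Membership in the symmetrized polydisc `𝔾_N`: all roots of
`z^N + Σ_{j=1}^N (−1)^j s_j z^{N−j}` lie in the open unit disc. -/
def memSymPolydisc {N : ℕ} (s : Fin N → ℂ) : Prop :=
  ∀ z : ℂ,
    z ^ N + ∑ j : Fin N, (-1 : ℂ) ^ ((j : ℕ) + 1) * s j * z ^ (N - 1 - (j : ℕ)) = 0 →
      ‖z‖ < 1

/-!
The polynomial `Q(z; y) − w P(z; x)` has constant term `1 − w x₁` and `j`-th coefficient
`(−1)^j (y_j − w x_{j+1})`, so after dividing by `1 − w x₁` it is `Q(z; s_w)` with `s_w` the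
point in the statement. Moreover `Q(z; s)` is the reversed polynomial of
`z^N + Σ (−1)^j s_j z^{N−j}`, so `s ∈ 𝔾_N` exactly when `Q(·; s)` has no zero in the closed disc.
-/

section

variable {M : ℕ}

lemma Qq_zero (y : Fin M → ℂ) : Qq y 0 = 1 := by
  simp [Qq]

lemma Qq_sub_mul_Pp (x : Fin (M + 1) → ℂ) (y : Fin M → ℂ) (w z : ℂ) :
    Qq y z - w * Pp x z = (1 - w * x 0) +
      ∑ j : Fin M, (-1 : ℂ) ^ ((j : ℕ) + 1) * (y j - w * x j.succ) * z ^ ((j : ℕ) + 1) := by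
  rw [Qq, Pp, Fin.sum_univ_succ, mul_add, Finset.mul_sum]
  simp only [Fin.val_zero, Fin.val_succ, pow_zero, mul_one, one_mul]
  rw [← sub_sub, add_sub_right_comm, add_sub_assoc, ← Finset.sum_sub_distrib]
  congr 1
  refine Finset.sum_congr rfl fun j _ => ?_
  ring

lemma Qq_sub_mul_Pp_zero (x : Fin (M + 1) → ℂ) (y : Fin M → ℂ) (w : ℂ) :
    Qq y 0 - w * Pp x 0 = 1 - w * x 0 := by
  simp [Qq_sub_mul_Pp]

lemma Qq_sub_mul_Pp_eq_mul_Qq (x : Fin (M + 1) → ℂ) (y : Fin M → ℂ) {w : ℂ}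
    (hc : 1 - w * x 0 ≠ 0) (z : ℂ) :
    Qq y z - w * Pp x z =
      (1 - w * x 0) * Qq (fun j => (y j - w * x j.succ) / (1 - w * x 0)) z := by
  rw [Qq_sub_mul_Pp, Qq, mul_add, mul_one, Finset.mul_sum]
  congr 1
  refine Finset.sum_congr rfl fun j _ => ?_
  field_simp

lemma pow_add_sum_eq_pow_mul_Qq_inv (s : Fin M → ℂ) {ζ : ℂ} (hζ : ζ ≠ 0) :
    ζ ^ M + ∑ j : Fin M, (-1 : ℂ) ^ ((j : ℕ) + 1) * s j * ζ ^ (M - 1 - (j : ℕ)) =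
      ζ ^ M * Qq s ζ⁻¹ := by
  rw [Qq, mul_add, mul_one, Finset.mul_sum]
  congr 1
  refine Finset.sum_congr rfl fun j _ => ?_
  have hpow : ζ ^ M = ζ ^ (M - 1 - (j : ℕ)) * ζ ^ ((j : ℕ) + 1) := by
    rw [← pow_add]; congr 1; omega
  rw [hpow, inv_pow]
  field_simp

lemma memSymPolydisc_iff_Qq_ne_zero (s : Fin M → ℂ) :
    memSymPolydisc s ↔ ∀ z : ℂ, ‖z‖ ≤ 1 → Qq s z ≠ 0 := by
  constructor
  · intro hs z hz hQ
    have hz0 : z ≠ 0 := by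
      rintro rfl
      simp [Qq_zero] at hQ
    have hroot := hs z⁻¹ (by rw [pow_add_sum_eq_pow_mul_Qq_inv s (inv_ne_zero hz0), inv_inv,
      hQ, mul_zero])
    rw [norm_inv, inv_lt_one₀ (norm_pos_iff.mpr hz0)] at hroot
    exact absurd hz hroot.not_ge
  · intro hQ ζ hroot
    by_contra! hζ
    have hζ0 : ζ ≠ 0 := by
      rintro rfl
      norm_num at hζ
    rw [pow_add_sum_eq_pow_mul_Qq_inv s hζ0] at hroot
    refine hQ ζ⁻¹ ?_ ((mul_eq_zero.mp hroot).resolve_left (pow_ne_zero _ hζ0))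
    rw [norm_inv]
    exact inv_le_one_of_one_le₀ hζ

end

/-- `(x,y) ∈ G_{1,n}` iff for every `w` in the closed unit disc, `1 − w·x₁ ≠ 0` and
the point `((y₁ − w x₂)/(1 − w x₁), …, (y_{n−1} − w x_n)/(1 − w x₁))` belongs to the
symmetrized polydisc `𝔾_{n−1}`. -/
theorem stmt9 (m : ℕ) (x : Fin (m+2) → ℂ) (y : Fin (m+1) → ℂ) :
    (∀ z w : ℂ, ‖z‖ ≤ 1 → ‖w‖ ≤ 1 → Qq y z - w * Pp x z ≠ 0) ↔
    (∀ w : ℂ, ‖w‖ ≤ 1 → 1 - w * x 0 ≠ 0 ∧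
      memSymPolydisc (fun j : Fin (m+1) => (y j - w * x j.succ) / (1 - w * x 0))) := by
  simp only [memSymPolydisc_iff_Qq_ne_zero]
  constructor
  · intro h w hw
    have hc : 1 - w * x 0 ≠ 0 := by
      simpa [Qq_sub_mul_Pp_zero] using h 0 w (by simp) hw
    refine ⟨hc, fun z hz hQ => h z w hz hw ?_⟩
    rw [Qq_sub_mul_Pp_eq_mul_Qq x y hc, hQ, mul_zero]
  · intro h z w hz hw
    obtain ⟨hc, hQ⟩ := h w hw
    rw [Qq_sub_mul_Pp_eq_mul_Qq x y hc]
    exact mul_ne_zero hc (hQ z hz)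
end

section
/- Fix N ≥ 2. If (x, y) ∈ G_{1,N} (the μ_{1,N}-quotient), then (y₁, …, y_{N−1}) belongs to the symmetrized polydisc 𝔾_{N−1}, and consequently |y₁| < N − 1. -/
/- If some root `z` of the polynomial defining `𝔾_{N−1}` had `‖z‖ ≥ 1`, then `1/z` would be a zero
of `Q(·; y)` in the closed disc, i.e. a point `(1/z, 0)` of the forbidden zero set. Hence all
`N − 1` roots lie in `𝔻`, and `y₁`, being their sum, has norm `< N − 1`. -/

open BigOperators

open Polynomial

lemma Multiset.norm_sum_lt_card {E : Type*} [SeminormedAddCommGroup E] {s : Multiset E}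
    (hs : s ≠ 0) (h : ∀ r ∈ s, ‖r‖ < 1) : ‖s.sum‖ < s.card := by
  calc ‖s.sum‖ ≤ (s.map (‖·‖)).sum := norm_multiset_sum_le s
    _ < (s.map fun _ => (1 : ℝ)).sum := Multiset.sum_lt_sum_of_nonempty hs h
    _ = s.card := by simp

noncomputable def symPolydiscPoly {N : ℕ} (s : Fin N → ℂ) : ℂ[X] :=
  X ^ N + ∑ j : Fin N, C ((-1 : ℂ) ^ ((j : ℕ) + 1) * s j) * X ^ (N - 1 - (j : ℕ))

section symPolydiscPoly

variable {N : ℕ} (s : Fin N → ℂ)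

lemma eval_symPolydiscPoly (z : ℂ) :
    (symPolydiscPoly s).eval z =
      z ^ N + ∑ j : Fin N, (-1 : ℂ) ^ ((j : ℕ) + 1) * s j * z ^ (N - 1 - (j : ℕ)) := by
  simp [symPolydiscPoly, eval_finsetSum]

lemma degree_symPolydiscPoly_tail_lt :
    (∑ j : Fin N, C ((-1 : ℂ) ^ ((j : ℕ) + 1) * s j) * X ^ (N - 1 - (j : ℕ))).degree <
      (N : WithBot ℕ) := by
  refine (degree_sum_le _ _).trans_lt ((Finset.sup_lt_iff (WithBot.bot_lt_coe _)).2 ?_)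
  intro j _
  refine (degree_C_mul_X_pow_le _ _).trans_lt ?_
  exact_mod_cast (by omega : N - 1 - (j : ℕ) < N)

lemma symPolydiscPoly_monic : (symPolydiscPoly s).Monic :=
  monic_X_pow_add (degree_symPolydiscPoly_tail_lt s)

lemma natDegree_symPolydiscPoly : (symPolydiscPoly s).natDegree = N :=
  natDegree_eq_of_degree_eq_some <| by
    rw [symPolydiscPoly, degree_add_eq_left_of_degree_lt (by
      rw [degree_X_pow]; exact degree_symPolydiscPoly_tail_lt s), degree_X_pow]

lemma memSymPolydisc_iff :
    memSymPolydisc s ↔ ∀ r ∈ (symPolydiscPoly s).roots, ‖r‖ < 1 := by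
  simp only [memSymPolydisc, mem_roots (symPolydiscPoly_monic s).ne_zero, IsRoot.def,
    eval_symPolydiscPoly]

end symPolydiscPoly

lemma nextCoeff_symPolydiscPoly {M : ℕ} (s : Fin (M + 1) → ℂ) :
    (symPolydiscPoly s).nextCoeff = -s 0 := by
  rw [nextCoeff, natDegree_symPolydiscPoly, if_neg M.succ_ne_zero, Nat.add_sub_cancel,
    symPolydiscPoly, coeff_add, coeff_X_pow, if_neg (by omega), finsetSum_coeff,
    Finset.sum_eq_single (0 : Fin (M + 1))]
  · simp
  · intro j _ hj
    have hj0 : (j : ℕ) ≠ 0 := fun h => hj (Fin.ext h)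
    rw [coeff_C_mul, coeff_X_pow, if_neg (by omega), mul_zero]
  · simp

lemma sum_roots_symPolydiscPoly {M : ℕ} (s : Fin (M + 1) → ℂ) :
    (symPolydiscPoly s).roots.sum = s 0 := by
  have := (IsAlgClosed.splits (symPolydiscPoly s)).nextCoeff_eq_neg_sum_roots_of_monic
    (symPolydiscPoly_monic s)
  rwa [nextCoeff_symPolydiscPoly, neg_inj, eq_comm] at this

lemma card_roots_symPolydiscPoly {N : ℕ} (s : Fin N → ℂ) :
    (symPolydiscPoly s).roots.card = N := by
  rw [splits_iff_card_roots.mp (IsAlgClosed.splits _), natDegree_symPolydiscPoly]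

lemma norm_apply_zero_lt_of_memSymPolydisc {M : ℕ} {s : Fin (M + 1) → ℂ}
    (hs : memSymPolydisc s) : ‖s 0‖ < M + 1 := by
  have hne : (symPolydiscPoly s).roots ≠ 0 := by
    intro h0
    simpa [h0] using card_roots_symPolydiscPoly s
  have := Multiset.norm_sum_lt_card hne ((memSymPolydisc_iff s).1 hs)
  rwa [sum_roots_symPolydiscPoly, card_roots_symPolydiscPoly, Nat.cast_add_one] at this

lemma pow_mul_Qq_inv {N : ℕ} (y : Fin N → ℂ) {z : ℂ} (hz : z ≠ 0) :
    z ^ N * Qq y z⁻¹ = (symPolydiscPoly y).eval z := by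
  rw [eval_symPolydiscPoly, Qq, mul_add, mul_one, Finset.mul_sum]
  congr 1
  refine Finset.sum_congr rfl fun j _ => ?_
  have hN : z ^ N = z ^ (N - 1 - (j : ℕ)) * z ^ ((j : ℕ) + 1) := by
    rw [← pow_add]; congr 1; omega
  rw [hN, inv_pow]
  field_simp

lemma memSymPolydisc_of_Qq_ne_zero {N : ℕ} {y : Fin N → ℂ}
    (h : ∀ z : ℂ, ‖z‖ ≤ 1 → Qq y z ≠ 0) : memSymPolydisc y := by
  refine (memSymPolydisc_iff y).2 fun z hz => ?_
  by_contra! hz1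
  have hz0 : z ≠ 0 := by rintro rfl; simp at hz1; linarith
  have hroot : z ^ N * Qq y z⁻¹ = 0 := by
    rw [pow_mul_Qq_inv y hz0]
    exact (mem_roots (symPolydiscPoly_monic y).ne_zero).1 hz
  refine h z⁻¹ (by rw [norm_inv]; exact inv_le_one_of_one_le₀ hz1) ?_
  exact (mul_eq_zero.1 hroot).resolve_left (pow_ne_zero _ hz0)

/-- If `(x,y) ∈ G_{1,N}`, then `(y₁,…,y_{N−1}) ∈ 𝔾_{N−1}`, and `|y₁| < N − 1`. -/
theorem stmt10 (m : ℕ) (x : Fin (m+2) → ℂ) (y : Fin (m+1) → ℂ)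
    (h : ∀ z w : ℂ, ‖z‖ ≤ 1 → ‖w‖ ≤ 1 → Qq y z - w * Pp x z ≠ 0) :
    memSymPolydisc y ∧ ‖y 0‖ < (m + 1 : ℝ) := by
  have hy : memSymPolydisc y :=
    memSymPolydisc_of_Qq_ne_zero fun z hz => by simpa using h z 0 hz (by simp)
  exact ⟨hy, norm_apply_zero_lt_of_memSymPolydisc hy⟩
end

section
/- Fix n ≥ 2 and (x,y) ∈ ℂⁿ × ℂ^{n−1}. If (x,y) ∈ G_{1,n}, then the rational function Ψ_n(z; x, y) = P_n(z; x)/Q_n(z; y) (after cancelling common linear factors) has no poles in the closed unit disc and satisfies |Ψ_n(z; x, y)| < 1 for all z in the closed unit disc. -/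
/-! If `|P(z)| ≥ |Q(z)|` at a point of the closed disc, then `w = Q(z)/P(z)` lies in the closed
disc and is a zero of `Q(z) - w P(z)`; so `|P| < |Q|` there, and in particular `Q` has no zeros.
Dividing `P` and `Q` by a common factor `g` leaves `P(z)/Q(z)` unchanged, since `g(z) ≠ 0`
wherever `Q(z) ≠ 0`. -/

open BigOperators Polynomial

/-- `P_n(·; x)` as a polynomial: `Σ_{j=0}^{n−1} (−1)^j x_{j+1} X^j`. -/
noncomputable def Ppoly {N : ℕ} (x : Fin N → ℂ) : Polynomial ℂ :=
  ∑ j : Fin N, Polynomial.C ((-1 : ℂ) ^ (j : ℕ) * x j) * Polynomial.X ^ (j : ℕ)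

/-- `Q_n(·; y)` as a polynomial: `1 + Σ_{j=1}^{n−1} (−1)^j y_j X^j`. -/
noncomputable def Qpoly {M : ℕ} (y : Fin M → ℂ) : Polynomial ℂ :=
  1 + ∑ j : Fin M, Polynomial.C ((-1 : ℂ) ^ ((j : ℕ) + 1) * y j) * Polynomial.X ^ ((j : ℕ) + 1)

theorem norm_lt_norm_of_forall_sub_mul_ne_zero {𝕜 : Type*} [NormedField 𝕜] {p q : 𝕜}
    (h : ∀ w : 𝕜, ‖w‖ ≤ 1 → q - w * p ≠ 0) : ‖p‖ < ‖q‖ := by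
  by_contra! hqp
  have hq : q ≠ 0 := by simpa using h 0 (by simp)
  have hp : p ≠ 0 := by
    rintro rfl
    exact hq (norm_le_zero_iff.mp (by simpa using hqp))
  refine h (q / p) ?_ (by field_simp; ring)
  rw [norm_div]
  exact div_le_one_of_le₀ hqp (norm_nonneg _)

namespace Polynomial

variable {K : Type*} [Field K] {p q g : K[X]} {z : K}

theorem eval_mul_eval_div_of_dvd (hg0 : g ≠ 0) (hg : g ∣ p) :
    g.eval z * (p / g).eval z = p.eval z := by
  rw [← eval_mul, EuclideanDomain.mul_div_cancel' hg0 hg]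

theorem ne_zero_of_dvd_of_eval_ne_zero (hg : g ∣ q) (hqz : q.eval z ≠ 0) : g ≠ 0 :=
  ne_zero_of_dvd_ne_zero (by rintro rfl; simp at hqz) hg

theorem eval_div_ne_zero_of_dvd (hg : g ∣ q) (hqz : q.eval z ≠ 0) : (q / g).eval z ≠ 0 :=
  right_ne_zero_of_mul
    (eval_mul_eval_div_of_dvd (ne_zero_of_dvd_of_eval_ne_zero hg hqz) hg ▸ hqz)

theorem eval_div_div_eval_div_of_dvd (hgp : g ∣ p) (hgq : g ∣ q) (hqz : q.eval z ≠ 0) :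
    (p / g).eval z / (q / g).eval z = p.eval z / q.eval z := by
  have hg0 := ne_zero_of_dvd_of_eval_ne_zero hgq hqz
  have hgz : g.eval z ≠ 0 := left_ne_zero_of_mul (eval_mul_eval_div_of_dvd hg0 hgq ▸ hqz)
  rw [← eval_mul_eval_div_of_dvd hg0 hgp, ← eval_mul_eval_div_of_dvd hg0 hgq,
    mul_div_mul_left _ _ hgz]

end Polynomial

/-- If `(x,y) ∈ G_{1,n}`, then the rational function `Ψ_n = P_n/Q_n` (after cancelling
the common factors, i.e. dividing both by their gcd) has no poles in the closed unit
disc and has modulus `< 1` there. -/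
theorem stmt12 (m : ℕ) (x : Fin (m+2) → ℂ) (y : Fin (m+1) → ℂ)
    (h : ∀ z w : ℂ, ‖z‖ ≤ 1 → ‖w‖ ≤ 1 →
      (Qpoly y - Polynomial.C w * Ppoly x).eval z ≠ 0) :
    ∀ z : ℂ, ‖z‖ ≤ 1 →
      (Qpoly y / EuclideanDomain.gcd (Ppoly x) (Qpoly y)).eval z ≠ 0 ∧
      ‖(Ppoly x / EuclideanDomain.gcd (Ppoly x) (Qpoly y)).eval z /
        (Qpoly y / EuclideanDomain.gcd (Ppoly x) (Qpoly y)).eval z‖ < 1 := by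
  intro z hz
  have hlt : ‖(Ppoly x).eval z‖ < ‖(Qpoly y).eval z‖ :=
    norm_lt_norm_of_forall_sub_mul_ne_zero fun w hw => by simpa using h z w hz hw
  have hQz : (Qpoly y).eval z ≠ 0 := norm_pos_iff.mp ((norm_nonneg _).trans_lt hlt)
  have hgP := EuclideanDomain.gcd_dvd_left (Ppoly x) (Qpoly y)
  have hgQ := EuclideanDomain.gcd_dvd_right (Ppoly x) (Qpoly y)
  refine ⟨eval_div_ne_zero_of_dvd hgQ hQz, ?_⟩
  rw [eval_div_div_eval_div_of_dvd hgP hgQ hQz, norm_div, div_lt_one (norm_pos_iff.mpr hQz)]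
  exact hlt
end

section
/- Let n ≥ 2 and suppose A, B ∈ ℂ^{n×n} satisfy: (i) the (n−1)×(n−1) submatrices A₁ and B₁ obtained by deleting the first row and column are equal and non-derogatory; (ii) the first-column vectors (a_{2,1},…,a_{n,1}) and (b_{2,1},…,b_{n,1}) are equal and form a cyclic vector of A₁; (iii) π_n(A) = π_n(B). Then the first rows of A and B coincide: (a_{1,1},…,a_{1,n}) = (b_{1,1},…,b_{1,n}); in particular A = B. -/
open Matrix BigOperators

/-!
Expanding `det (X • 1 - A)` along the first row and column gives the bordered-determinant formula
`χ_A = (X - a₁₁) χ_{A₁} - rᵀ adj(X • 1 - A₁) v`, with `r` the rest of the first row and `v` the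
rest of the first column. The principal-minor sums `π_n` determine `χ_A`, so comparing `A` with
`B` yields `(a₁₁ - b₁₁) χ_{A₁} = uᵀ adj(X • 1 - A₁) v` for `u = r_A - r_B`. The right-hand side
has degree `< deg χ_{A₁}`, hence `a₁₁ = b₁₁` and `uᵀ adj(X • 1 - A₁) v = 0`. Feeding
`adj(X • 1 - A₁) (X • 1 - A₁) = χ_{A₁}` into the same degree argument gives `uᵀ A₁ᵏ v = 0` for
every `k`, and since `v` is cyclic, `u = 0`.
-/

namespace Matrix

open Polynomial

variable {R : Type*} [CommRing R]

theorem det_mul_det_submatrix_succ {m : ℕ} (P : Matrix (Fin (m + 1)) (Fin (m + 1)) R) :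
    P.det * (P.submatrix Fin.succ Fin.succ).det =
      (P 0 0 * (P.submatrix Fin.succ Fin.succ).det -
        (fun j => P 0 j.succ) ⬝ᵥ (P.submatrix Fin.succ Fin.succ).cramer fun i => P i.succ 0) *
        (P.submatrix Fin.succ Fin.succ).det := by
  set D := P.submatrix Fin.succ Fin.succ
  set c : Fin m → R := fun i => P i.succ 0
  set r := P 0 0 * D.det - (fun j => P 0 j.succ) ⬝ᵥ D.cramer c
  -- rows `1, …, m` of `P` annihilate `x`; then entry `0` of `adj P (P x) = det P • x` is the claim
  set x : Fin (m + 1) → R := Fin.cons D.det (-D.cramer c)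
  have hx : P *ᵥ x = Pi.single 0 r := by
    funext i
    refine Fin.cases ?_ (fun i => ?_) i
    · simp only [mulVec, dotProduct, Fin.sum_univ_succ, Fin.cons_zero, Fin.cons_succ,
        Pi.neg_apply, mul_neg, Finset.sum_neg_distrib, Pi.single_eq_same, x, r]
      ring
    · have hcramer := congrFun (mulVec_cramer D c) i
      simp only [mulVec, dotProduct, submatrix_apply, Pi.smul_apply, smul_eq_mul,
        Fin.sum_univ_succ, Fin.cons_zero, Fin.cons_succ, Pi.neg_apply, mul_neg,
        Finset.sum_neg_distrib, Pi.single_eq_of_ne (Fin.succ_ne_zero i), D, c, x] at hcramer ⊢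
      rw [hcramer, mul_comm, add_neg_cancel]
  have hadj := congrFun (congrArg (adjugate P *ᵥ ·) hx) 0
  simp only [mulVec_mulVec, adjugate_mul, smul_mulVec, one_mulVec, mulVec_single, Pi.smul_apply,
    col_apply, adjugate_fin_succ_eq_det_submatrix, Fin.succAbove_zero] at hadj
  simpa [x, mul_comm] using hadj

theorem submatrix_charmatrix {m n : Type*} [Fintype n] [DecidableEq n] (M : Matrix n n R)
    (f g : m → n) : (charmatrix M).submatrix f g =
      (X : R[X]) • ((1 : Matrix n n R).submatrix f g).map C + (-M.submatrix f g).map C := by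
  refine Matrix.ext fun a b => ?_
  simp [charmatrix_apply, one_apply, diagonal_apply, sub_eq_add_neg]

theorem natDegree_adjugate_charmatrix_le {m : ℕ} (M : Matrix (Fin (m + 1)) (Fin (m + 1)) R)
    (i j : Fin (m + 1)) : (adjugate (charmatrix M) i j).natDegree ≤ m := by
  have hsign : ((-1 : R[X]) ^ ((j : ℕ) + i)).natDegree = 0 := by
    rw [← C_1, ← C_neg, ← C_pow, natDegree_C]
  rw [adjugate_fin_succ_eq_det_submatrix, submatrix_charmatrix]
  refine natDegree_mul_le.trans ?_
  simpa [hsign] using natDegree_det_X_add_C_le (n := Fin m) (α := R) _ _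

section resolventForm

variable {n : Type*} [Fintype n] [DecidableEq n]

/-- `uᵀ adj(X • 1 - M) w`, which is `χ_M · uᵀ (X • 1 - M)⁻¹ w` wherever the inverse exists. -/
noncomputable def resolventForm (M : Matrix n n R) (u w : n → R) : R[X] :=
  (C ∘ u : n → R[X]) ⬝ᵥ (adjugate (charmatrix M) *ᵥ (C ∘ w))

theorem resolventForm_sub_left (M : Matrix n n R) (u u' w : n → R) :
    resolventForm M (u - u') w = resolventForm M u w - resolventForm M u' w := by
  simp only [resolventForm, ← sub_dotProduct]
  congr 1
  ext i
  simp

theorem resolventForm_mulVec (M : Matrix n n R) (u w : n → R) :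
    resolventForm M u (M *ᵥ w) = X * resolventForm M u w - C (u ⬝ᵥ w) * M.charpoly := by
  have hY : charmatrix M *ᵥ (C ∘ w) = (X : R[X]) • (C ∘ w) - C ∘ (M *ᵥ w) := by
    funext i
    simp [charmatrix, sub_mulVec, scalar_apply, RingHom.map_mulVec]
  have hadj : adjugate (charmatrix M) *ᵥ (C ∘ (M *ᵥ w)) =
      (X : R[X]) • (adjugate (charmatrix M) *ᵥ (C ∘ w)) - M.charpoly • (C ∘ w) := by
    have h := congrArg (adjugate (charmatrix M) *ᵥ ·) hY
    simp only [mulVec_mulVec, adjugate_mul, mulVec_sub, mulVec_smul, smul_mulVec,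
      one_mulVec] at h
    rw [charpoly, h]
    abel
  rw [resolventForm, resolventForm, hadj, dotProduct_sub, dotProduct_smul, dotProduct_smul,
    ← RingHom.map_dotProduct, smul_eq_mul, smul_eq_mul, mul_comm (charpoly M)]

end resolventForm

theorem natDegree_resolventForm_le {m : ℕ} (M : Matrix (Fin (m + 1)) (Fin (m + 1)) R)
    (u w : Fin (m + 1) → R) : (resolventForm M u w).natDegree ≤ m := by
  simp only [resolventForm, dotProduct, mulVec, Function.comp_apply]
  refine natDegree_sum_le_of_forall_le _ _ fun i _ => (natDegree_C_mul_le (u i) _).trans ?_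
  refine natDegree_sum_le_of_forall_le _ _ fun j _ => (natDegree_mul_C_le _ (w j)).trans ?_
  exact natDegree_adjugate_charmatrix_le M i j

theorem eq_zero_of_resolventForm_eq_C_mul_charpoly [Nontrivial R] {m : ℕ}
    {M : Matrix (Fin (m + 1)) (Fin (m + 1)) R} {u w : Fin (m + 1) → R} {c : R}
    (h : resolventForm M u w = C c * M.charpoly) : c = 0 := by
  have hcoeff := congrArg (fun p : R[X] => p.coeff (m + 1)) h
  simp only [coeff_eq_zero_of_natDegree_lt ((natDegree_resolventForm_le M u w).trans_lt
    (Nat.lt_succ_self m)), coeff_C_mul] at hcoeff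
  have hmonic := (charpoly_monic M).coeff_natDegree
  rw [charpoly_natDegree_eq_dim, Fintype.card_fin] at hmonic
  rw [hmonic, mul_one] at hcoeff
  exact hcoeff.symm

theorem dotProduct_pow_mulVec_eq_zero [Nontrivial R] {m : ℕ}
    {M : Matrix (Fin (m + 1)) (Fin (m + 1)) R} {u v : Fin (m + 1) → R}
    (h : resolventForm M u v = 0) (k : ℕ) : u ⬝ᵥ (M ^ k *ᵥ v) = 0 := by
  have step (w) (hw : resolventForm M u w = 0) :
      u ⬝ᵥ w = 0 ∧ resolventForm M u (M *ᵥ w) = 0 := by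
    have hc : u ⬝ᵥ w = 0 := by
      refine neg_eq_zero.mp
        (eq_zero_of_resolventForm_eq_C_mul_charpoly (M := M) (u := u) (w := M *ᵥ w) ?_)
      rw [resolventForm_mulVec, hw, C_neg]
      ring
    refine ⟨hc, ?_⟩
    rw [resolventForm_mulVec, hw, hc, C_0]
    ring
  have hpow (k : ℕ) : resolventForm M u (M ^ k *ᵥ v) = 0 := by
    induction k with
    | zero => simpa using h
    | succ k ih =>
      rw [pow_succ', ← mulVec_mulVec]
      exact (step _ ih).2
  exact (step _ (hpow k)).1

theorem charmatrix_submatrix_succ {m : ℕ} (A : Matrix (Fin (m + 1)) (Fin (m + 1)) R) :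
    (charmatrix A).submatrix Fin.succ Fin.succ = charmatrix (A.submatrix Fin.succ Fin.succ) := by
  refine Matrix.ext fun i j => ?_
  by_cases h : i = j
  · subst h
    simp [charmatrix_apply_eq]
  · simp [charmatrix_apply_ne _ _ _ h, charmatrix_apply_ne _ _ _ (Fin.succ_injective _ |>.ne h)]

theorem charpoly_eq_sub_resolventForm {m : ℕ} (A : Matrix (Fin (m + 1)) (Fin (m + 1)) R) :
    A.charpoly = (X - C (A 0 0)) * (A.submatrix Fin.succ Fin.succ).charpoly -
      resolventForm (A.submatrix Fin.succ Fin.succ) (fun j => A 0 j.succ) fun i => A i.succ 0 := by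
  have h := det_mul_det_submatrix_succ (charmatrix A)
  simp only [charmatrix_submatrix_succ, charmatrix_apply_eq,
    charmatrix_apply_ne _ _ _ (Fin.succ_ne_zero _),
    charmatrix_apply_ne _ _ _ (Fin.succ_ne_zero _).symm] at h
  set A₁ := A.submatrix Fin.succ Fin.succ
  have hborder : ((fun j => -C (A 0 j.succ)) ⬝ᵥ (charmatrix A₁).cramer fun i => -C (A i.succ 0)) =
      resolventForm A₁ (fun j => A 0 j.succ) fun i => A i.succ 0 := by
    rw [resolventForm, ← cramer_eq_adjugate_mulVec, ← neg_neg (cramer _ (C ∘ _)), ← map_neg,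
      dotProduct_neg, ← neg_dotProduct]
    rfl
  rw [hborder] at h
  exact (charpoly_monic A₁).isRegular.right h

end Matrix

open Finset in
theorem sum_powersetCard_subDet {N : ℕ} [NeZero N] (A : Matrix (Fin N) (Fin N) ℂ) (k : ℕ) :
    ∑ s ∈ univ.powersetCard k, subDet A s = piX A k + piY A k := by
  rw [← sum_filter_add_sum_filter_not _ (fun s => (0 : Fin N) ∈ s), piX, piY]
  congr 2 <;> ext s <;> simp [mem_powersetCard]

theorem charpoly_eq_of_piX_eq_of_piY_eq {N : ℕ} [NeZero N] {A B : Matrix (Fin N) (Fin N) ℂ}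
    (hX : ∀ j, piX A j = piX B j) (hY : ∀ j, piY A j = piY B j) : A.charpoly = B.charpoly := by
  ext i
  rcases le_or_gt i N with hi | hi
  · have hcoeff (M : Matrix (Fin N) (Fin N) ℂ) :
        M.charpoly.coeff i = (-1) ^ (N - i) * (piX M (N - i) + piY M (N - i)) := by
      have h := M.charpoly_coeff_eq_sum_minors (N - i) (by simp)
      rw [Fintype.card_fin, Nat.sub_sub_self hi] at h
      rw [h, ← sum_powersetCard_subDet]
      rfl
    rw [hcoeff, hcoeff, hX, hY]
  · rw [Polynomial.coeff_eq_zero_of_natDegree_lt, Polynomial.coeff_eq_zero_of_natDegree_lt] <;>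
      simpa using hi

theorem eq_zero_of_isCyclicVec {m : ℕ} {M : Matrix (Fin m) (Fin m) ℂ} {u v : Fin m → ℂ}
    (hv : IsCyclicVec M v) (h : ∀ k : ℕ, u ⬝ᵥ (M ^ k *ᵥ v) = 0) : u = 0 := by
  refine dotProduct_eq_zero u fun w => ?_
  have hw : w ∈ Submodule.span ℂ (Set.range fun k : ℕ => M ^ k *ᵥ v) := hv ▸ Submodule.mem_top
  induction hw using Submodule.span_induction with
  | mem x hx =>
    obtain ⟨k, rfl⟩ := hx
    exact h k
  | zero => exact dotProduct_zero u
  | add x y _ _ hx hy => rw [dotProduct_add, hx, hy, add_zero]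
  | smul a x _ hx => rw [dotProduct_smul, hx, smul_zero]

/-- If `A` and `B` have equal (non-derogatory) lower-right submatrices `A₁ = B₁`,
equal first columns `(a_{2,1},…,a_{n,1}) = (b_{2,1},…,b_{n,1})` which form a cyclic
vector of `A₁`, and `π_n(A) = π_n(B)`, then the first rows of `A` and `B` coincide;
in particular `A = B`. -/
theorem stmt19 (n : ℕ) (A B : Matrix (Fin (n+2)) (Fin (n+2)) ℂ)
    (hsub : (fun i j : Fin (n+1) => A i.succ j.succ) = (fun i j => B i.succ j.succ))
    (hcol : (fun i : Fin (n+1) => A i.succ 0) = (fun i => B i.succ 0))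
    (hcyc : IsCyclicVec (Matrix.of fun i j : Fin (n+1) => A i.succ j.succ)
      (fun i => A i.succ 0))
    (hpiX : ∀ j : ℕ, piX A j = piX B j) (hpiY : ∀ j : ℕ, piY A j = piY B j) :
    (∀ k : Fin (n+2), A 0 k = B 0 k) ∧ A = B := by
  have hrows (i : Fin (n + 1)) (j : Fin (n + 2)) : A i.succ j = B i.succ j :=
    Fin.cases (congrFun hcol i) (congrFun (congrFun hsub i)) j
  have hχ := charpoly_eq_of_piX_eq_of_piY_eq hpiX hpiY
  rw [charpoly_eq_sub_resolventForm A, charpoly_eq_sub_resolventForm B,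
    show B.submatrix Fin.succ Fin.succ = A.submatrix Fin.succ Fin.succ from
      Matrix.ext fun i j => (hrows i j.succ).symm, ← hcol] at hχ
  have hdiff : resolventForm (A.submatrix Fin.succ Fin.succ)
      ((fun j => A 0 j.succ) - fun j => B 0 j.succ) (fun i => A i.succ 0) =
      Polynomial.C (B 0 0 - A 0 0) * (A.submatrix Fin.succ Fin.succ).charpoly := by
    rw [resolventForm_sub_left, Polynomial.C_sub]
    linear_combination -hχ
  have h00 : A 0 0 = B 0 0 :=
    (sub_eq_zero.mp (eq_zero_of_resolventForm_eq_C_mul_charpoly hdiff)).symm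
  rw [h00, sub_self, Polynomial.C_0, zero_mul] at hdiff
  have hrow := eq_zero_of_isCyclicVec hcyc (dotProduct_pow_mulVec_eq_zero hdiff)
  have hrow0 (k : Fin (n + 2)) : A 0 k = B 0 k :=
    Fin.cases h00 (fun k => sub_eq_zero.mp (congrFun hrow k)) k
  exact ⟨hrow0, Matrix.ext fun i j => Fin.cases (hrow0 j) (fun i => hrows i j) i⟩
end
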